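/- arXiv:2002.08635 — 2 statements merged into one kernel-verified Lean document; each statement's English description precedes it below -/
import Mathlib

section
/- Let Ω ⊂ ℝ^N be bounded measurable, α, β ∈ L^∞(Ω) with α < β a.e., U = {v ∈ L²(Ω) : α ≤ v ≤ β a.e.}, ū ∈ U, and û* ∈ N(ū;U). Then U is polyhedric at ū for û*: T(ū;U) ∩ {û*}^⊥ = closure( cone(U − ū) ∩ {û*}^⊥ ), where cone(U − ū) = ⋃_{t>0}(U − ū)/t and {û*}^⊥ = {v ∈ L²(Ω) : ⟨û*, v⟩ = 0}. -/
/-!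
Let `S = {u' = 0}`. Testing the normal-cone inequality against the patched functions
`u₀ + 1_A (w - u₀) ∈ U` gives `u' (w - u₀) ≤ 0` pointwise a.e. for every `w ∈ U`, hence
`u' v ≤ 0` a.e. on the tangent cone; if moreover `⟪u', v⟫ = 0` then `u' v = 0` a.e., i.e.
`v` vanishes off `S`. The truncation `f ↦ 1_S f` is a continuous linear map on `L²` that fixes
such `v`, maps the radial cone into itself (by the same patching) and into `{u'}ᗮ`, so it sends
radial directions converging to `v` to radial directions in `{u'}ᗮ` converging to `v`.
-/

open MeasureTheory RealInnerProductSpace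
open scoped ENNReal

/-- Radial cone to a set `Θ` at `u₀`. -/
def radialCone {H : Type*} [NormedAddCommGroup H] [InnerProductSpace ℝ H]
    (Θ : Set H) (u₀ : H) : Set H :=
  {v : H | ∃ t : ℝ, 0 < t ∧ ∃ w ∈ Θ, v = t⁻¹ • (w - u₀)}

/-- Tangent cone: closure of the radial cone. -/
def tangentCone' {H : Type*} [NormedAddCommGroup H] [InnerProductSpace ℝ H]
    (Θ : Set H) (u₀ : H) : Set H := closure (radialCone Θ u₀)

/-- Normal cone of convex analysis. -/
def normalCone' {H : Type*} [NormedAddCommGroup H] [InnerProductSpace ℝ H]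
    (Θ : Set H) (u₀ : H) : Set H :=
  {u' : H | ∀ u ∈ Θ, ⟪u', u - u₀⟫ ≤ 0}

/-- Orthogonal complement of a single vector. -/
def perp {H : Type*} [NormedAddCommGroup H] [InnerProductSpace ℝ H] (u' : H) : Set H :=
  {v : H | ⟪u', v⟫ = 0}

namespace MeasureTheory

namespace L2

variable {X : Type*} [MeasurableSpace X] {μ : Measure X}

lemma integrable_mul (f g : Lp ℝ 2 μ) : Integrable (fun x => f x * g x) μ := by
  simpa [mul_comm] using integrable_inner (𝕜 := ℝ) f g

lemma real_inner_eq_integral_mul (f g : Lp ℝ 2 μ) : ⟪f, g⟫ = ∫ x, f x * g x ∂μ := by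
  simp [inner_def, mul_comm]

lemma ae_mul_eq_zero_of_inner_eq_zero {f g : Lp ℝ 2 μ} (hfg : ∀ᵐ x ∂μ, f x * g x ≤ 0)
    (h : ⟪f, g⟫ = 0) : ∀ᵐ x ∂μ, f x * g x = 0 := by
  have hneg : 0 ≤ᵐ[μ] fun x => -(f x * g x) := by
    filter_upwards [hfg] with x hx
    exact neg_nonneg.mpr hx
  rw [real_inner_eq_integral_mul, ← neg_eq_zero, ← integral_neg] at h
  filter_upwards [(integral_eq_zero_iff_of_nonneg_ae hneg (integrable_mul f g).neg).mp h]
    with x hx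
  exact neg_eq_zero.mp hx

end L2

namespace Lp

variable {X E : Type*} [MeasurableSpace X] {μ : Measure X} [NormedAddCommGroup E]
  [NormedSpace ℝ E] {p : ℝ≥0∞} {S : Set X}

noncomputable def indicatorₗ (hS : MeasurableSet S) : Lp E p μ →ₗ[ℝ] Lp E p μ where
  toFun f := ((Lp.memLp f).indicator hS).toLp _
  map_add' f g := by
    rw [← MemLp.toLp_add]
    refine MemLp.toLp_congr _ _ ?_
    filter_upwards [coeFn_add f g] with x hx
    by_cases hxS : x ∈ S <;> simp only [Set.indicator_of_mem, Set.indicator_of_notMem, hxS,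
      not_false_eq_true, hx, Pi.add_apply, add_zero]
  map_smul' c f := by
    rw [← MemLp.toLp_const_smul]
    refine MemLp.toLp_congr _ _ ?_
    filter_upwards [coeFn_smul c f] with x hx
    by_cases hxS : x ∈ S <;> simp [hxS, hx]

lemma norm_indicatorₗ_le (hS : MeasurableSet S) (f : Lp E p μ) :
    ‖indicatorₗ hS f‖ ≤ ‖f‖ := by
  rw [indicatorₗ, LinearMap.coe_mk, AddHom.coe_mk, norm_toLp, norm_def]
  exact ENNReal.toReal_mono (eLpNorm_ne_top f) (eLpNorm_indicator_le _)

variable [Fact (1 ≤ p)]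

noncomputable def indicatorCLM (hS : MeasurableSet S) : Lp E p μ →L[ℝ] Lp E p μ :=
  (indicatorₗ hS).mkContinuous 1 fun f => (one_mul ‖f‖).symm ▸ norm_indicatorₗ_le hS f

lemma coeFn_indicatorCLM (hS : MeasurableSet S) (f : Lp E p μ) :
    indicatorCLM hS f =ᵐ[μ] S.indicator f := by
  rw [indicatorCLM, LinearMap.mkContinuous_apply, indicatorₗ, LinearMap.coe_mk, AddHom.coe_mk]
  exact MemLp.coeFn_toLp _

lemma indicatorCLM_eq_self (hS : MeasurableSet S) {f : Lp E p μ}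
    (hf : ∀ᵐ x ∂μ, x ∉ S → f x = 0) : indicatorCLM hS f = f := by
  refine Lp.ext ?_
  filter_upwards [coeFn_indicatorCLM hS f, hf] with x hx hfx
  rw [hx]
  by_cases hxS : x ∈ S
  · exact Set.indicator_of_mem hxS _
  · rw [Set.indicator_of_notMem hxS, hfx hxS]

lemma inner_indicatorCLM (hS : MeasurableSet S) (f g : Lp ℝ 2 μ) :
    ⟪f, indicatorCLM hS g⟫ = ∫ x in S, f x * g x ∂μ := by
  rw [L2.real_inner_eq_integral_mul, ← integral_indicator hS]
  refine integral_congr_ae ?_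
  filter_upwards [coeFn_indicatorCLM hS g] with x hx
  by_cases hxS : x ∈ S <;> simp [hxS, hx]

lemma inner_indicatorCLM_eq_zero (hS : MeasurableSet S) {f : Lp ℝ 2 μ}
    (hf : ∀ x ∈ S, f x = 0) (g : Lp ℝ 2 μ) : ⟪f, indicatorCLM hS g⟫ = 0 := by
  rw [inner_indicatorCLM]
  exact setIntegral_eq_zero_of_forall_eq_zero fun x hx => by simp [hf x hx]

lemma isClosed_setOf_ae_mul_nonpos (g : X → ℝ) :
    IsClosed {v : Lp ℝ p μ | ∀ᵐ x ∂μ, g x * v x ≤ 0} := by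
  refine IsSeqClosed.isClosed fun v v₀ hv hlim => ?_
  obtain ⟨φ, -, hφ⟩ := (tendstoInMeasure_of_tendsto_Lp hlim).exists_seq_tendsto_ae
  filter_upwards [ae_all_iff.mpr hv, hφ] with x hvx hφx
  exact le_of_tendsto' (hφx.const_mul (g x)) fun n => hvx (φ n)

end Lp

end MeasureTheory

section Cones

variable {H : Type*} [NormedAddCommGroup H] [InnerProductSpace ℝ H]

lemma isClosed_perp (u' : H) : IsClosed (perp u') :=
  isClosed_eq (continuous_const.inner continuous_id) continuous_const

lemma closure_radialCone_inter_perp_subset (Θ : Set H) (u₀ u' : H) :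
    closure (radialCone Θ u₀ ∩ perp u') ⊆ tangentCone' Θ u₀ ∩ perp u' :=
  (closure_inter_subset_inter_closure _ _).trans <|
    Set.inter_subset_inter_right _ (isClosed_perp u').closure_subset

end Cones

def boxConstraints {X : Type*} [MeasurableSpace X] (μ : Measure X) (p : ℝ≥0∞) (α β : X → ℝ) :
    Set (Lp ℝ p μ) :=
  {v | ∀ᵐ x ∂μ, α x ≤ v x ∧ v x ≤ β x}

section BoxConstraints

variable {X : Type*} [MeasurableSpace X] {μ : Measure X} {α β : X → ℝ} {S : Set X}

lemma add_indicatorCLM_sub_mem_boxConstraints {p : ℝ≥0∞} [Fact (1 ≤ p)] (hS : MeasurableSet S)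
    {u w : Lp ℝ p μ} (hu : u ∈ boxConstraints μ p α β) (hw : w ∈ boxConstraints μ p α β) :
    u + Lp.indicatorCLM hS (w - u) ∈ boxConstraints μ p α β := by
  change ∀ᵐ x ∂μ, _
  filter_upwards [Lp.coeFn_add u (Lp.indicatorCLM hS (w - u)), Lp.coeFn_indicatorCLM hS (w - u),
    Lp.coeFn_sub w u, hu, hw] with x h_add h_ind h_sub hux hwx
  rw [h_add, Pi.add_apply, h_ind]
  by_cases hxS : x ∈ S
  · rwa [Set.indicator_of_mem hxS, h_sub, Pi.sub_apply, add_sub_cancel]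
  · rwa [Set.indicator_of_notMem hxS, add_zero]

lemma indicatorCLM_mem_radialCone_boxConstraints (hS : MeasurableSet S) {u₀ v : Lp ℝ 2 μ}
    (hu₀ : u₀ ∈ boxConstraints μ 2 α β) (hv : v ∈ radialCone (boxConstraints μ 2 α β) u₀) :
    Lp.indicatorCLM hS v ∈ radialCone (boxConstraints μ 2 α β) u₀ := by
  obtain ⟨t, ht, w, hw, rfl⟩ := hv
  exact ⟨t, ht, _, add_indicatorCLM_sub_mem_boxConstraints hS hu₀ hw,
    by rw [map_smul, add_sub_cancel_left]⟩

variable {u₀ u' : Lp ℝ 2 μ}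

lemma ae_mul_sub_nonpos_of_mem_normalCone (hu₀ : u₀ ∈ boxConstraints μ 2 α β)
    (hu' : u' ∈ normalCone' (boxConstraints μ 2 α β) u₀) {w : Lp ℝ 2 μ}
    (hw : w ∈ boxConstraints μ 2 α β) : ∀ᵐ x ∂μ, u' x * (w - u₀) x ≤ 0 := by
  refine ae_le_of_forall_setIntegral_le (L2.integrable_mul _ _) (integrable_zero _ _ _)
    fun s hs _ => ?_
  rw [integral_zero, ← Lp.inner_indicatorCLM hs,
    ← add_sub_cancel_left u₀ (Lp.indicatorCLM hs (w - u₀))]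
  exact hu' _ (add_indicatorCLM_sub_mem_boxConstraints hs hu₀ hw)

lemma tangentCone_boxConstraints_subset (hu₀ : u₀ ∈ boxConstraints μ 2 α β)
    (hu' : u' ∈ normalCone' (boxConstraints μ 2 α β) u₀) :
    tangentCone' (boxConstraints μ 2 α β) u₀ ⊆ {v | ∀ᵐ x ∂μ, u' x * v x ≤ 0} := by
  refine closure_minimal ?_ (Lp.isClosed_setOf_ae_mul_nonpos _)
  rintro _ ⟨t, ht, w, hw, rfl⟩
  filter_upwards [Lp.coeFn_smul t⁻¹ (w - u₀), ae_mul_sub_nonpos_of_mem_normalCone hu₀ hu' hw]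
    with x h_smul h_sign
  rw [h_smul, Pi.smul_apply, smul_eq_mul, mul_left_comm]
  exact mul_nonpos_of_nonneg_of_nonpos (inv_nonneg.mpr ht.le) h_sign

end BoxConstraints

theorem stmt10_general {N : ℕ}
    (μ : Measure (EuclideanSpace ℝ (Fin N)))
    (α β : EuclideanSpace ℝ (Fin N) → ℝ)
    (U : Set (Lp ℝ 2 μ))
    (hU : U = {v : Lp ℝ 2 μ | ∀ᵐ x ∂μ, α x ≤ v x ∧ v x ≤ β x})
    (u₀ : Lp ℝ 2 μ) (hu₀ : u₀ ∈ U)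
    (u' : Lp ℝ 2 μ) (hu' : u' ∈ normalCone' U u₀) :
    tangentCone' U u₀ ∩ perp u' = closure (radialCone U u₀ ∩ perp u') := by
  change U = boxConstraints μ 2 α β at hU
  subst hU
  refine Set.Subset.antisymm ?_ (closure_radialCone_inter_perp_subset _ _ _)
  rintro v ⟨hvT, hv_perp⟩
  have hS : MeasurableSet {x | u' x = 0} :=
    (Lp.stronglyMeasurable u').measurable (measurableSet_singleton 0)
  have hv_supp : ∀ᵐ x ∂μ, x ∉ {x | u' x = 0} → v x = 0 := by
    filter_upwards [L2.ae_mul_eq_zero_of_inner_eq_zero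
      (tangentCone_boxConstraints_subset hu₀ hu' hvT) hv_perp] with x hx hxS
    exact (mul_eq_zero.mp hx).resolve_left hxS
  rw [← Lp.indicatorCLM_eq_self hS hv_supp]
  refine closure_mono ?_ (image_closure_subset_closure_image (Lp.indicatorCLM hS).continuous
    ⟨v, hvT, rfl⟩)
  rintro _ ⟨w, hw, rfl⟩
  exact ⟨indicatorCLM_mem_radialCone_boxConstraints hS hu₀ hw,
    Lp.inner_indicatorCLM_eq_zero hS (fun _ hx => hx) w⟩

theorem stmt10 {N : ℕ} (Ω : Set (EuclideanSpace ℝ (Fin N)))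
    (hΩm : MeasurableSet Ω) (hΩb : Bornology.IsBounded Ω)
    (μ : Measure (EuclideanSpace ℝ (Fin N))) (hμ : μ = volume.restrict Ω)
    (α β : EuclideanSpace ℝ (Fin N) → ℝ)
    (hbd : ∃ M : ℝ, ∀ᵐ x ∂μ, |α x| ≤ M ∧ |β x| ≤ M)
    (hαβ : ∀ᵐ x ∂μ, α x < β x)
    (U : Set (Lp ℝ 2 μ))
    (hU : U = {v : Lp ℝ 2 μ | ∀ᵐ x ∂μ, α x ≤ v x ∧ v x ≤ β x})
    (u₀ : Lp ℝ 2 μ) (hu₀ : u₀ ∈ U)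
    (u' : Lp ℝ 2 μ) (hu' : u' ∈ normalCone' U u₀) :
    tangentCone' U u₀ ∩ perp u' = closure (radialCone U u₀ ∩ perp u') :=
  stmt10_general μ α β U hU u₀ hu₀ u' hu'
end

section
/- Let H be a Hilbert space, and let A : H → H be a bounded self-adjoint linear operator of the form A = ζ I + K with ζ > 0 and K compact and self-adjoint, so that Q(h) = ⟨Ah, h⟩ is a Legendre form. Let D ⊂ H be a weakly sequentially closed cone. If ⟨Av, v⟩ > 0 for all v ∈ D with v ≠ 0, then there exists κ > 0 such that ⟨Av, v⟩ ≥ κ‖v‖² for all v ∈ D. -/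
open Filter RealInnerProductSpace

/-- Weak (sequential) convergence in an inner product space. -/
def WeakConv {H : Type*} [NormedAddCommGroup H] [InnerProductSpace ℝ H]
    (u : ℕ → H) (x : H) : Prop :=
  ∀ y : H, Tendsto (fun n => ⟪u n, y⟫) atTop (nhds ⟪x, y⟫)

lemma weak_seq_compact_aux {H : Type*} [NormedAddCommGroup H] [InnerProductSpace ℝ H]
    [CompleteSpace H] (u : ℕ → H) (hb : ∀ n, ‖u n‖ ≤ 1) :
    ∃ x : H, ‖x‖ ≤ 1 ∧ ∃ φ : ℕ → ℕ, StrictMono φ ∧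
      ∀ y : H, Tendsto (fun k => ⟪u (φ k), y⟫) atTop (nhds ⟪x, y⟫) := by
  -- Step A: diagonal extraction via compactness of the product of intervals
  have hS : IsCompact (Set.univ.pi fun _ : ℕ => Set.Icc (-1 : ℝ) 1) :=
    isCompact_univ_pi fun _ => isCompact_Icc
  have hmem : ∀ n, (fun m => ⟪u n, u m⟫) ∈ Set.univ.pi fun _ : ℕ => Set.Icc (-1 : ℝ) 1 := by
    intro n m _
    have h1 := abs_real_inner_le_norm (u n) (u m)
    have h2 : ‖u n‖ * ‖u m‖ ≤ 1 := by
      nlinarith [hb n, hb m, norm_nonneg (u n), norm_nonneg (u m)]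
    have := abs_le.mp (h1.trans h2)
    exact ⟨this.1, this.2⟩
  obtain ⟨g, -, φ, hφ, hconv⟩ := hS.tendsto_subseq hmem
  have hcoord : ∀ m, Tendsto (fun k => ⟪u (φ k), u m⟫) atTop (nhds (g m)) := by
    intro m
    exact (continuous_apply m).continuousAt.tendsto.comp hconv
  -- Step B: convergence on the span of the range of u
  have span_conv : ∀ z ∈ Submodule.span ℝ (Set.range u),
      ∃ c : ℝ, Tendsto (fun k => ⟪u (φ k), z⟫) atTop (nhds c) := by
    intro z hz
    induction hz using Submodule.span_induction with
    | mem z hzm =>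
      obtain ⟨m, rfl⟩ := hzm
      exact ⟨g m, hcoord m⟩
    | zero => exact ⟨0, by simpa using tendsto_const_nhds⟩
    | add a b _ _ iha ihb =>
      obtain ⟨ca, hca⟩ := iha
      obtain ⟨cb, hcb⟩ := ihb
      exact ⟨ca + cb, by simpa [inner_add_right] using hca.add hcb⟩
    | smul t a _ iha =>
      obtain ⟨ca, hca⟩ := iha
      exact ⟨t * ca, by simpa [real_inner_smul_right] using hca.const_mul t⟩
  -- Step C: convergence on the closure of the span
  have closure_conv : ∀ a ∈ closure ((Submodule.span ℝ (Set.range u) : Submodule ℝ H) : Set H),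
      ∃ c : ℝ, Tendsto (fun k => ⟪u (φ k), a⟫) atTop (nhds c) := by
    intro a ha
    have hC : CauchySeq fun k => ⟪u (φ k), a⟫ := by
      rw [Metric.cauchySeq_iff]
      intro ε hε
      obtain ⟨z, hz, hdz⟩ := Metric.mem_closure_iff.mp ha (ε / 4) (by linarith)
      obtain ⟨c, hc⟩ := span_conv z hz
      obtain ⟨N, hN⟩ := Metric.cauchySeq_iff.mp hc.cauchySeq (ε / 4) (by linarith)
      refine ⟨N, fun m hm n hn => ?_⟩
      have key : ∀ j, |⟪u (φ j), a⟫ - ⟪u (φ j), z⟫| ≤ ε / 4 := by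
        intro j
        rw [← inner_sub_right]
        calc |⟪u (φ j), a - z⟫| ≤ ‖u (φ j)‖ * ‖a - z‖ := abs_real_inner_le_norm _ _
          _ ≤ 1 * ‖a - z‖ := by
              have := norm_nonneg (a - z); exact mul_le_mul_of_nonneg_right (hb _) this
          _ ≤ ε / 4 := by
              rw [one_mul]
              have : dist a z < ε / 4 := hdz
              rw [dist_eq_norm] at this; linarith
      have hNmn := hN m hm n hn
      rw [Real.dist_eq] at hNmn ⊢
      have k1 := key m
      have k2 := key n
      have t1 := abs_sub_le ⟪u (φ m), a⟫ ⟪u (φ m), z⟫ ⟪u (φ n), a⟫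
      have t2 := abs_sub_le ⟪u (φ m), z⟫ ⟪u (φ n), z⟫ ⟪u (φ n), a⟫
      have k2' : |⟪u (φ n), z⟫ - ⟪u (φ n), a⟫| ≤ ε / 4 := by
        rw [abs_sub_comm]; exact k2
      linarith
    exact cauchySeq_tendsto_of_complete hC
  -- Step D: convergence for all y, and construction of the weak limit
  set M : Submodule ℝ H := (Submodule.span ℝ (Set.range u)).topologicalClosure with hM
  haveI : CompleteSpace M := (Submodule.isClosed_topologicalClosure _).completeSpace_coe
  have hlim : ∀ y : H, ∃ c : ℝ, Tendsto (fun k => ⟪u (φ k), y⟫) atTop (nhds c) := by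
    intro y
    obtain ⟨a, haM, b, hb', rfl⟩ := M.exists_add_mem_mem_orthogonal y
    obtain ⟨c, hc⟩ := closure_conv a haM
    refine ⟨c, ?_⟩
    have hz : ∀ k, ⟪u (φ k), b⟫ = 0 := fun k =>
      (Submodule.mem_orthogonal M b).mp hb' (u (φ k))
        (Submodule.le_topologicalClosure _ (Submodule.subset_span ⟨φ k, rfl⟩))
    simpa [inner_add_right, hz] using hc
  classical
  choose f hf using hlim
  have hbd : ∀ y, |f y| ≤ ‖y‖ := by
    intro y
    refine le_of_tendsto (hf y).abs (Eventually.of_forall fun k => ?_)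
    calc |⟪u (φ k), y⟫| ≤ ‖u (φ k)‖ * ‖y‖ := abs_real_inner_le_norm _ _
      _ ≤ 1 * ‖y‖ := mul_le_mul_of_nonneg_right (hb _) (norm_nonneg y)
      _ = ‖y‖ := one_mul _
  have hadd : ∀ y z, f (y + z) = f y + f z := fun y z =>
    tendsto_nhds_unique (hf (y + z)) (by simpa [inner_add_right] using (hf y).add (hf z))
  have hsmul : ∀ (t : ℝ) (y : H), f (t • y) = t * f y := fun t y =>
    tendsto_nhds_unique (hf (t • y)) (by simpa [real_inner_smul_right] using (hf y).const_mul t)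
  let L : H →L[ℝ] ℝ := LinearMap.mkContinuous
    { toFun := f, map_add' := hadd,
      map_smul' := fun t y => by simpa [smul_eq_mul] using hsmul t y } 1
    (fun y => by rw [one_mul]; simpa [Real.norm_eq_abs] using hbd y)
  set x : H := (InnerProductSpace.toDual ℝ H).symm L with hx
  have hxy : ∀ y, ⟪x, y⟫ = f y := fun y => InnerProductSpace.toDual_symm_apply
  have hw : ∀ y : H, Tendsto (fun k => ⟪u (φ k), y⟫) atTop (nhds ⟪x, y⟫) := by
    intro y; rw [hxy y]; exact hf y
  refine ⟨x, ?_, φ, hφ, hw⟩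
  have h1 : ‖x‖ ^ 2 ≤ ‖x‖ := by
    have h0 : ⟪x, x⟫ = f x := hxy x
    rw [real_inner_self_eq_norm_sq] at h0
    calc ‖x‖ ^ 2 = f x := h0
      _ ≤ |f x| := le_abs_self _
      _ ≤ ‖x‖ := hbd x
  nlinarith [norm_nonneg x]

theorem stmt19 {H : Type*} [NormedAddCommGroup H] [InnerProductSpace ℝ H]
    [CompleteSpace H] (A K : H →L[ℝ] H) (ζ : ℝ) (hζ : 0 < ζ)
    (hA : ∀ h : H, A h = ζ • h + K h)
    (hKcompact : IsCompactOperator K)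
    (hKsa : ∀ x y : H, ⟪K x, y⟫ = ⟪x, K y⟫)
    (D : Set H)
    (hcone : ∀ t : ℝ, 0 < t → ∀ v ∈ D, t • v ∈ D)
    (hwc : ∀ (u : ℕ → H) (x : H), (∀ n, u n ∈ D) → WeakConv u x → x ∈ D)
    (hpos : ∀ v ∈ D, v ≠ 0 → 0 < ⟪A v, v⟫) :
    ∃ κ : ℝ, 0 < κ ∧ ∀ v ∈ D, κ * ‖v‖ ^ 2 ≤ ⟪A v, v⟫ := by
  by_contra hcon
  push_neg at hcon
  have hv : ∀ n : ℕ, ∃ v ∈ D, ⟪A v, v⟫ < (1 / (n + 1)) * ‖v‖ ^ 2 := fun n =>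
    hcon (1 / (n + 1)) (by positivity)
  choose v hvD hvlt using hv
  have hvne : ∀ n, v n ≠ 0 := by
    intro n h0
    have := hvlt n
    rw [h0] at this
    simp at this
  set u : ℕ → H := fun n => (‖v n‖)⁻¹ • v n with hu
  have hvpos : ∀ n, (0 : ℝ) < ‖v n‖ := fun n => norm_pos_iff.mpr (hvne n)
  have hun : ∀ n, ‖u n‖ = 1 := by
    intro n
    rw [hu]
    simp only [norm_smul, norm_inv, norm_norm]
    exact inv_mul_cancel₀ (hvpos n).ne'
  have huD : ∀ n, u n ∈ D := fun n => hcone _ (inv_pos.mpr (hvpos n)) _ (hvD n)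
  have hune : ∀ n, u n ≠ 0 := fun n h0 => by
    have := hun n; rw [h0] at this; simp at this
  -- Q(u n) = ‖v n‖⁻² Q(v n)
  have hQ : ∀ n, ⟪A (u n), u n⟫ = (‖v n‖ ^ 2)⁻¹ * ⟪A (v n), v n⟫ := by
    intro n
    rw [hu]
    simp only [map_smul, real_inner_smul_left, real_inner_smul_right]
    rw [pow_two, mul_inv]
    ring
  have hQlt : ∀ n, ⟪A (u n), u n⟫ < 1 / (n + 1) := by
    intro n
    rw [hQ n]
    have h2 : (0 : ℝ) < (‖v n‖ ^ 2) := pow_pos (hvpos n) 2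
    have h3 := hvlt n
    rw [inv_mul_lt_iff₀ h2]
    calc ⟪A (v n), v n⟫ < (1 / (↑n + 1)) * ‖v n‖ ^ 2 := h3
      _ = ‖v n‖ ^ 2 * (1 / (↑n + 1)) := by ring
  have hQpos : ∀ n, 0 < ⟪A (u n), u n⟫ := fun n => hpos _ (huD n) (hune n)
  -- Q(u n) → 0
  have hQ0 : Tendsto (fun n => ⟪A (u n), u n⟫) atTop (nhds 0) := by
    exact tendsto_of_tendsto_of_tendsto_of_le_of_le tendsto_const_nhds
      tendsto_one_div_add_atTop_nhds_zero_nat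
      (fun n => (hQpos n).le) (fun n => (hQlt n).le)
  -- Q(h) = ζ + ⟪K h, h⟫ for unit h
  have hsplit : ∀ n, ⟪A (u n), u n⟫ = ζ + ⟪K (u n), u n⟫ := by
    intro n
    rw [hA (u n), inner_add_left, real_inner_smul_left, real_inner_self_eq_norm_sq, hun n]
    ring
  have hK0 : Tendsto (fun n => ⟪K (u n), u n⟫) atTop (nhds (-ζ)) := by
    have : Tendsto (fun n => ⟪A (u n), u n⟫ - ζ) atTop (nhds (0 - ζ)) := hQ0.sub_const ζ
    rw [zero_sub] at this
    refine this.congr fun n => ?_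
    rw [hsplit n]; ring
  -- weakly convergent subsequence
  obtain ⟨x, hx1, φ, hφ, hwφ⟩ := weak_seq_compact_aux u (fun n => (hun n).le)
  -- strongly convergent subsequence of K (u (φ n))
  have hcomp : IsCompact (closure (⇑K '' Metric.closedBall 0 1)) := by
    have : IsCompactOperator ⇑(K.toLinearMap) := hKcompact
    exact this.isCompact_closure_image_of_bounded Metric.isBounded_closedBall
  have hmem : ∀ n, K (u (φ n)) ∈ closure (⇑K '' Metric.closedBall 0 1) := fun n =>
    subset_closure ⟨u (φ n), by simp [Metric.mem_closedBall, dist_zero_right, (hun _).le], rfl⟩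
  obtain ⟨w, -, ψ, hψ, hwt⟩ := hcomp.tendsto_subseq hmem
  set u' : ℕ → H := fun k => u (φ (ψ k)) with hu'
  have hwt' : Tendsto (fun k => K (u' k)) atTop (nhds w) := hwt
  have hw' : ∀ y : H, Tendsto (fun k => ⟪u' k, y⟫) atTop (nhds ⟪x, y⟫) := fun y =>
    (hwφ y).comp hψ.tendsto_atTop
  -- x ∈ D
  have hxD : x ∈ D := hwc u' x (fun k => huD _) hw'
  -- ⟪w, x⟫ = ⟪K x, x⟫
  have hKux : Tendsto (fun k => ⟪K (u' k), x⟫) atTop (nhds ⟪w, x⟫) :=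
    hwt'.inner tendsto_const_nhds
  have hKux2 : Tendsto (fun k => ⟪K (u' k), x⟫) atTop (nhds ⟪K x, x⟫) := by
    have h1 : Tendsto (fun k => ⟪u' k, K x⟫) atTop (nhds ⟪x, K x⟫) := hw' (K x)
    have h2 : ⟪x, K x⟫ = ⟪K x, x⟫ := real_inner_comm _ _
    rw [h2] at h1
    exact h1.congr fun k => (hKsa (u' k) x).symm
  have hwKx : ⟪w, x⟫ = ⟪K x, x⟫ := tendsto_nhds_unique hKux hKux2
  -- ⟪K u', u'⟫ → ⟪w, x⟫
  have hKuu : Tendsto (fun k => ⟪K (u' k), u' k⟫) atTop (nhds ⟪w, x⟫) := by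
    have hzero : Tendsto (fun k => ⟪K (u' k) - w, u' k⟫) atTop (nhds 0) := by
      refine squeeze_zero_norm (fun k => ?_) (tendsto_iff_norm_sub_tendsto_zero.mp hwt')
      calc ‖⟪K (u' k) - w, u' k⟫‖ = |⟪K (u' k) - w, u' k⟫| := rfl
          _ ≤ ‖K (u' k) - w‖ * ‖u' k‖ := abs_real_inner_le_norm _ _
          _ = ‖K (u' k) - w‖ := by rw [hun (φ (ψ k))]; ring
    have hwu : Tendsto (fun k => ⟪w, u' k⟫) atTop (nhds ⟪w, x⟫) := by
      have h := hw' w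
      rw [show (⟪x, w⟫ : ℝ) = ⟪w, x⟫ from real_inner_comm _ _] at h
      exact h.congr fun k => real_inner_comm _ _
    have := hzero.add hwu
    rw [zero_add] at this
    refine this.congr fun k => ?_
    rw [inner_sub_left]; ring
  -- ⟪K u', u'⟫ → -ζ along the subsequence
  have hKuu2 : Tendsto (fun k => ⟪K (u' k), u' k⟫) atTop (nhds (-ζ)) :=
    hK0.comp (hφ.comp hψ).tendsto_atTop
  have hKxx : ⟪K x, x⟫ = -ζ := by
    rw [← hwKx]
    exact tendsto_nhds_unique hKuu hKuu2
  -- contradiction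
  have hxne : x ≠ 0 := by
    intro h0
    rw [h0] at hKxx
    simp at hKxx
    linarith
  have hAx : ⟪A x, x⟫ = ζ * ‖x‖ ^ 2 - ζ := by
    rw [hA x, inner_add_left, real_inner_smul_left, real_inner_self_eq_norm_sq, hKxx]
    ring
  have hfin := hpos x hxD hxne
  rw [hAx] at hfin
  have hsq : ‖x‖ ^ 2 ≤ 1 := by nlinarith [norm_nonneg x]
  nlinarith
end
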